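/- arXiv:1901.02765 — 11 statements merged into one kernel-verified Lean document; each statement's English description precedes it below -/
import Mathlib

section
/- Let V(u) be the algebra of a nonzero cubic form u ≠ 0 on a finite-dimensional real inner product space. If x is a maximizer of ⟨x, x²⟩ on the unit sphere ⟨x,x⟩ = 1 and x² ≠ 0, then c := x/⟨x², x⟩ is a nonzero idempotent (c² = c). In particular, V(u) contains a nonzero idempotent provided ⟨x,x²⟩ attains a positive maximum on the unit sphere. -/
/-!
The objective `F y = ⟪y, y²⟫` is a cubic form, so a maximizer `x` on the unit sphere gives
`F y ≤ F x * ‖y‖ ^ 3` everywhere, and `F x ≥ 0` because `F` is odd. For `h ⟂ x` the point `x + t • h`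
has norm at least `1`, so `F (x + t • h) ≤ F x * (1 + t ^ 2 * ‖h‖ ^ 2) ^ 2`; comparing the linear terms in
`t` of these two polynomials gives `⟪x², h⟫ = 0`. Hence `x² = λ x` with `λ = ⟪x², x⟫ ≠ 0`, and
`(λ⁻¹ • x)² = λ⁻¹ • x`.
-/

open RealInnerProductSpace

theorem eq_zero_of_forall_nonneg_quartic {a b c d : ℝ}
    (h : ∀ t : ℝ, 0 ≤ a * t + b * t ^ 2 + c * t ^ 3 + d * t ^ 4) : a = 0 := by
  have hderiv : HasDerivAt (fun t : ℝ => a * t + b * t ^ 2 + c * t ^ 3 + d * t ^ 4) a 0 := by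
    simpa using ((((hasDerivAt_id' (0 : ℝ)).const_mul a).fun_add
      ((hasDerivAt_pow 2 (0 : ℝ)).const_mul b)).fun_add
      ((hasDerivAt_pow 3 (0 : ℝ)).const_mul c)).fun_add ((hasDerivAt_pow 4 (0 : ℝ)).const_mul d)
  have hmin : IsLocalMin (fun t : ℝ => a * t + b * t ^ 2 + c * t ^ 3 + d * t ^ 4) 0 :=
    IsMinOn.isLocalMin (s := Set.univ) (fun t _ => by simpa using h t) Filter.univ_mem
  exact hmin.hasDerivAt_eq_zero hderiv

section Polarization

variable {V : Type*} [AddCommGroup V] {u : V → ℝ} {T : V → V → V → ℝ}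

theorem polarization_comm₁₂ (hT : ∀ x y z, T x y z =
      u (x + y + z) - u (x + y) - u (x + z) - u (y + z) + u x + u y + u z)
    (x y z : V) : T x y z = T y x z := by
  rw [hT, hT, add_comm y x]
  ring

theorem polarization_comm₂₃ (hT : ∀ x y z, T x y z =
      u (x + y + z) - u (x + y) - u (x + z) - u (y + z) + u x + u y + u z)
    (x y z : V) : T x y z = T x z y := by
  rw [hT, hT, add_right_comm x z y, add_comm z y]
  ring

end Polarization

section InnerMul

variable {V : Type*} [NormedAddCommGroup V] [InnerProductSpace ℝ V] {T : V → V → V → ℝ}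
  {mul : V → V → V}

theorem mul_comm_of_inner_mul (hmul : ∀ x y z, ⟪mul x y, z⟫ = T x y z)
    (h₁₂ : ∀ x y z, T x y z = T y x z) (a b : V) : mul a b = mul b a :=
  ext_inner_right ℝ fun v => by rw [hmul, hmul, h₁₂]

theorem add_mul_of_inner_mul (hmul : ∀ x y z, ⟪mul x y, z⟫ = T x y z)
    (hlin : ∀ y z, IsLinearMap ℝ (fun x => T x y z)) (a b c : V) :
    mul (a + b) c = mul a c + mul b c :=
  ext_inner_right ℝ fun v => by rw [inner_add_left, hmul, hmul, hmul, (hlin c v).map_add]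

theorem smul_mul_of_inner_mul (hmul : ∀ x y z, ⟪mul x y, z⟫ = T x y z)
    (hlin : ∀ y z, IsLinearMap ℝ (fun x => T x y z)) (r : ℝ) (a c : V) :
    mul (r • a) c = r • mul a c :=
  ext_inner_right ℝ fun v => by
    rw [real_inner_smul_left, hmul, hmul, (hlin c v).map_smul, smul_eq_mul]

theorem inner_mul_eq_inner_mul_of_inner_mul (hmul : ∀ x y z, ⟪mul x y, z⟫ = T x y z)
    (h₁₂ : ∀ x y z, T x y z = T y x z) (h₂₃ : ∀ x y z, T x y z = T x z y) (a b c : V) :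
    ⟪mul a b, c⟫ = ⟪a, mul b c⟫ := by
  rw [real_inner_comm (mul b c) a, hmul, hmul, h₁₂, h₂₃]

noncomputable def bilinOfInnerMul (hmul : ∀ x y z, ⟪mul x y, z⟫ = T x y z)
    (hlin : ∀ y z, IsLinearMap ℝ (fun x => T x y z)) (h₁₂ : ∀ x y z, T x y z = T y x z) :
    V →ₗ[ℝ] V →ₗ[ℝ] V :=
  have hcomm := mul_comm_of_inner_mul hmul h₁₂
  LinearMap.mk₂ ℝ mul (add_mul_of_inner_mul hmul hlin) (smul_mul_of_inner_mul hmul hlin)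
    (fun a b c => by rw [hcomm, add_mul_of_inner_mul hmul hlin, hcomm b, hcomm c])
    (fun r a c => by rw [hcomm, smul_mul_of_inner_mul hmul hlin, hcomm])

end InnerMul

section InvariantAlgebra

variable {V : Type*} [NormedAddCommGroup V] [InnerProductSpace ℝ V] {B : V →ₗ[ℝ] V →ₗ[ℝ] V}

theorem inner_smul_mul_smul (r : ℝ) (y : V) :
    ⟪r • y, B (r • y) (r • y)⟫ = r ^ 3 * ⟪y, B y y⟫ := by
  simp only [map_smul, LinearMap.smul_apply, real_inner_smul_left, real_inner_smul_right]
  ring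

theorem inner_add_smul_mul_add_smul (hcomm : ∀ a b, B a b = B b a)
    (hinv : ∀ a b c, ⟪B a b, c⟫ = ⟪a, B b c⟫) (x h : V) (t : ℝ) :
    ⟪x + t • h, B (x + t • h) (x + t • h)⟫ =
      ⟪x, B x x⟫ + 3 * t * ⟪B x x, h⟫ + 3 * t ^ 2 * ⟪h, B x h⟫ + t ^ 3 * ⟪h, B h h⟫ := by
  have e₁ : ⟪x, B x h⟫ = ⟪B x x, h⟫ := (hinv x x h).symm
  have e₂ : ⟪x, B h h⟫ = ⟪h, B x h⟫ := by rw [← hinv, hcomm, real_inner_comm]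
  simp only [map_add, map_smul, LinearMap.add_apply, LinearMap.smul_apply, inner_add_left,
    inner_add_right, real_inner_smul_left, real_inner_smul_right, hcomm h x, e₁, e₂,
    real_inner_comm h (B x x)]
  ring

variable {x : V}

theorem inner_mul_le_mul_norm_pow_of_isMaxOn
    (hmax : IsMaxOn (fun y => ⟪y, B y y⟫) {y : V | ⟪y, y⟫ = 1} x) (y : V) :
    ⟪y, B y y⟫ ≤ ⟪x, B x x⟫ * ‖y‖ ^ 3 := by
  rcases eq_or_ne y 0 with rfl | hy
  · simp
  have hunit : ⟪‖y‖⁻¹ • y, ‖y‖⁻¹ • y⟫ = 1 := by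
    rw [real_inner_self_eq_norm_sq, norm_smul, norm_inv, norm_norm,
      inv_mul_cancel₀ (norm_ne_zero_iff.mpr hy), one_pow]
  have hle : ⟪‖y‖⁻¹ • y, B (‖y‖⁻¹ • y) (‖y‖⁻¹ • y)⟫ ≤ ⟪x, B x x⟫ := hmax hunit
  have hscale := inner_smul_mul_smul (B := B) ‖y‖ (‖y‖⁻¹ • y)
  rw [smul_inv_smul₀ (norm_ne_zero_iff.mpr hy)] at hscale
  rw [hscale, mul_comm _ (‖y‖ ^ 3)]
  exact mul_le_mul_of_nonneg_left hle (by positivity)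

theorem inner_mul_nonneg_of_isMaxOn (hxs : ⟪x, x⟫ = 1)
    (hmax : IsMaxOn (fun y => ⟪y, B y y⟫) {y : V | ⟪y, y⟫ = 1} x) : 0 ≤ ⟪x, B x x⟫ := by
  have hneg : ⟪-x, B (-x) (-x)⟫ ≤ ⟪x, B x x⟫ := hmax (by simpa using hxs)
  have hodd := inner_smul_mul_smul (B := B) (-1) x
  simp only [neg_one_smul] at hodd
  linarith

theorem inner_mul_self_eq_zero_of_isMaxOn (hcomm : ∀ a b, B a b = B b a)
    (hinv : ∀ a b c, ⟪B a b, c⟫ = ⟪a, B b c⟫) (hxs : ⟪x, x⟫ = 1)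
    (hmax : IsMaxOn (fun y => ⟪y, B y y⟫) {y : V | ⟪y, y⟫ = 1} x) {h : V} (hh : ⟪x, h⟫ = 0) :
    ⟪B x x, h⟫ = 0 := by
  set M := ⟪x, B x x⟫
  have hM := inner_mul_nonneg_of_isMaxOn hxs hmax
  have hnorm (t : ℝ) : ‖x + t • h‖ ^ 2 = 1 + t ^ 2 * ‖h‖ ^ 2 := by
    rw [norm_add_sq_real, real_inner_smul_right, hh, norm_smul, ← real_inner_self_eq_norm_sq,
      hxs, Real.norm_eq_abs, mul_pow, sq_abs]
    ring
  have hbound (t : ℝ) : ⟪x + t • h, B (x + t • h) (x + t • h)⟫ ≤ M * (1 + t ^ 2 * ‖h‖ ^ 2) ^ 2 := by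
    have hge : 1 ≤ ‖x + t • h‖ := by
      nlinarith [hnorm t, norm_nonneg (x + t • h), sq_nonneg t, sq_nonneg ‖h‖]
    calc _ ≤ M * ‖x + t • h‖ ^ 3 := inner_mul_le_mul_norm_pow_of_isMaxOn hmax _
      _ ≤ M * ‖x + t • h‖ ^ 4 := mul_le_mul_of_nonneg_left (pow_le_pow_right₀ hge (by norm_num)) hM
      _ = M * (1 + t ^ 2 * ‖h‖ ^ 2) ^ 2 := by rw [← hnorm, ← pow_mul]
  have hlinear := eq_zero_of_forall_nonneg_quartic (a := -3 * ⟪B x x, h⟫)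
    (b := 2 * M * ‖h‖ ^ 2 - 3 * ⟪h, B x h⟫) (c := -⟪h, B h h⟫) (d := M * ‖h‖ ^ 4) fun t => by
      have := hbound t
      rw [inner_add_smul_mul_add_smul hcomm hinv] at this
      linear_combination this
  linarith

theorem mul_self_eq_smul_of_isMaxOn (hcomm : ∀ a b, B a b = B b a)
    (hinv : ∀ a b c, ⟪B a b, c⟫ = ⟪a, B b c⟫) (hxs : ⟪x, x⟫ = 1)
    (hmax : IsMaxOn (fun y => ⟪y, B y y⟫) {y : V | ⟪y, y⟫ = 1} x) :
    B x x = ⟪B x x, x⟫ • x := by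
  set r := ⟪B x x, x⟫
  have horth : ⟪x, B x x - r • x⟫ = 0 := by
    rw [inner_sub_right, real_inner_smul_right, hxs, real_inner_comm]
    ring
  have hperp := inner_mul_self_eq_zero_of_isMaxOn hcomm hinv hxs hmax horth
  have hzero : ⟪B x x - r • x, B x x - r • x⟫ = 0 := by
    rw [inner_sub_left, hperp, real_inner_smul_left, horth, mul_zero, sub_zero]
  exact sub_eq_zero.mp (inner_self_eq_zero.mp hzero)

end InvariantAlgebra

theorem mul_inv_smul_self_of_mul_self_eq_smul {R M : Type*} [Field R] [AddCommGroup M]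
    [Module R M] (B : M →ₗ[R] M →ₗ[R] M) {x : M} {r : R} (hr : r ≠ 0) (hx : B x x = r • x) :
    B (r⁻¹ • x) (r⁻¹ • x) = r⁻¹ • x := by
  simp only [map_smul, LinearMap.smul_apply, hx, smul_smul]
  rw [inv_mul_cancel₀ hr, mul_one]

theorem stmt_3_general {V : Type*} [NormedAddCommGroup V] [InnerProductSpace ℝ V]
    (u : V → ℝ) (T : V → V → V → ℝ)
    (hT : ∀ x y z, T x y z =
      u (x + y + z) - u (x + y) - u (x + z) - u (y + z) + u x + u y + u z)
    (hlin : ∀ y z, IsLinearMap ℝ (fun x => T x y z))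
    (mul : V → V → V)
    (hmul : ∀ x y z, ⟪mul x y, z⟫ = T x y z)
    (x : V) (hxs : ⟪x, x⟫ = 1)
    (hmax : IsMaxOn (fun y => ⟪y, mul y y⟫) {y : V | ⟪y, y⟫ = 1} x)
    (hx2 : mul x x ≠ 0) :
    (⟪mul x x, x⟫)⁻¹ • x ≠ 0 ∧
      mul ((⟪mul x x, x⟫)⁻¹ • x) ((⟪mul x x, x⟫)⁻¹ • x) =
        (⟪mul x x, x⟫)⁻¹ • x := by
  have h₁₂ := polarization_comm₁₂ hT
  have h₂₃ := polarization_comm₂₃ hT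
  let B := bilinOfInnerMul hmul hlin h₁₂
  have hsq : mul x x = ⟪mul x x, x⟫ • x :=
    mul_self_eq_smul_of_isMaxOn (B := B) (mul_comm_of_inner_mul hmul h₁₂)
      (inner_mul_eq_inner_mul_of_inner_mul hmul h₁₂ h₂₃) hxs hmax
  have hr : ⟪mul x x, x⟫ ≠ 0 := fun h => hx2 (by rw [hsq, h, zero_smul])
  have hx : x ≠ 0 := by
    rintro rfl
    simp at hxs
  exact ⟨smul_ne_zero (inv_ne_zero hr) hx, mul_inv_smul_self_of_mul_self_eq_smul B hr hsq⟩

/-- If `x` maximizes `⟪x, x²⟫` on the unit sphere and `x² ≠ 0`, then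
`c = x / ⟪x², x⟫` is a nonzero idempotent of the algebra of the cubic form `u`. -/
theorem stmt_3 {V : Type*} [NormedAddCommGroup V] [InnerProductSpace ℝ V]
    [FiniteDimensional ℝ V]
    (u : V → ℝ) (hu : u ≠ 0) (T : V → V → V → ℝ)
    (hT : ∀ x y z, T x y z =
      u (x + y + z) - u (x + y) - u (x + z) - u (y + z) + u x + u y + u z)
    (hlin : ∀ y z, IsLinearMap ℝ (fun x => T x y z))
    (hcub : ∀ x, 6 * u x = T x x x)
    (mul : V → V → V)
    (hmul : ∀ x y z, ⟪mul x y, z⟫ = T x y z)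
    (x : V) (hxs : ⟪x, x⟫ = 1)
    (hmax : IsMaxOn (fun y => ⟪y, mul y y⟫) {y : V | ⟪y, y⟫ = 1} x)
    (hx2 : mul x x ≠ 0) :
    (⟪mul x x, x⟫)⁻¹ • x ≠ 0 ∧
      mul ((⟪mul x x, x⟫)⁻¹ • x) ((⟪mul x x, x⟫)⁻¹ • x) =
        (⟪mul x x, x⟫)⁻¹ • x :=
  stmt_3_general u T hT hlin mul hmul x hxs hmax hx2
end

section
/- In a finite-dimensional commutative real algebra V with positive definite associating bilinear form ⟨,⟩ (i.e. ⟨xy,z⟩ = ⟨x,yz⟩), the identity ⟨x²,x²⟩ = ⟨x,x⟩² holds for all x if and only if x³ = ⟨x,x⟩x for all x, where x³ = x(x²). -/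
open RealInnerProductSpace

/-- In a commutative metrised algebra, `⟪x², x²⟫ = ⟪x, x⟫²` for all x
iff `x³ = ⟪x, x⟫ x` for all x. -/
theorem stmt_5 {V : Type*} [NormedAddCommGroup V] [InnerProductSpace ℝ V]
    [FiniteDimensional ℝ V]
    (mul : V →ₗ[ℝ] V →ₗ[ℝ] V)
    (hcomm : ∀ x y, mul x y = mul y x)
    (hassoc : ∀ x y z, ⟪mul x y, z⟫ = ⟪x, mul y z⟫) :
    (∀ x, ⟪mul x x, mul x x⟫ = ⟪x, x⟫ ^ 2) ↔
      (∀ x, mul x (mul x x) = ⟪x, x⟫ • x) := by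
  constructor
  · intro h x
    apply ext_inner_right ℝ
    intro y
    rw [hcomm x (mul x x), hassoc, real_inner_smul_left]
    -- goal: ⟪mul x x, mul x y⟫ = ⟪x,x⟫ * ⟪x,y⟫
    have expand : ∀ s : ℝ,
        ⟪mul x x, mul x x⟫ + 4*s*⟪mul x x, mul x y⟫
          + s^2*(2*⟪mul x x, mul y y⟫ + 4*⟪mul x y, mul x y⟫)
          + 4*s^3*⟪mul x y, mul y y⟫ + s^4*⟪mul y y, mul y y⟫
        = (⟪x,x⟫ + 2*s*⟪x,y⟫ + s^2*⟪y,y⟫)^2 := by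
      intro s
      have hxy := h (x + s • y)
      have hm : mul (x + s • y) (x + s • y)
          = mul x x + (2*s) • mul x y + (s^2) • mul y y := by
        simp only [map_add, map_smul, LinearMap.add_apply, LinearMap.smul_apply,
          hcomm y x]
        module
      rw [hm] at hxy
      have c1 := real_inner_comm (mul x y) (mul x x)
      have c2 := real_inner_comm (mul y y) (mul x x)
      have c3 := real_inner_comm (mul y y) (mul x y)
      have c4 := real_inner_comm x y
      simp only [inner_add_left, inner_add_right, real_inner_smul_left,
        real_inner_smul_right] at hxy
      linear_combination hxy + 2*s*c1 + s^2*c2 + 2*s^3*c3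
        + 2*s*(⟪x,x⟫+2*s*⟪x,y⟫+s^2*⟪y,y⟫)*c4 + s^2*(⟪y,x⟫-⟪x,y⟫)*c4
    have h1 := expand 1
    have h2 := expand (-1)
    have h3 := expand 2
    have h4 := expand (-2)
    nlinarith [h1, h2, h3, h4]
  · intro h x
    have := h x
    have : ⟪mul x x, mul x x⟫ = ⟪x, mul x (mul x x)⟫ := by
      rw [hassoc x x (mul x x)]
    rw [this, h x, real_inner_smul_right]
    ring
end

section
/- In an eiconal algebra, L_{x²} commutes with L_x² for every x, i.e. [L_{x²}, L_x²] = 0. -/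
open RealInnerProductSpace

/-- In an eiconal algebra, `[L_{x²}, L_x²] = 0`. -/
theorem stmt_7 {V : Type*} [NormedAddCommGroup V] [InnerProductSpace ℝ V]
    [FiniteDimensional ℝ V]
    (mul : V →ₗ[ℝ] V →ₗ[ℝ] V)
    (hcomm : ∀ x y, mul x y = mul y x)
    (hassoc : ∀ x y z, ⟪mul x y, z⟫ = ⟪x, mul y z⟫)
    (heic : ∀ x, mul x (mul x x) = ⟪x, x⟫ • x) :
    ∀ x y : V, mul (mul x x) (mul x (mul x y)) =
      mul x (mul x (mul (mul x x) y)) := by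
  have key : ∀ x y : V, mul (mul x x) y
      = (2 * ⟪x, y⟫) • x + ⟪x, x⟫ • y - (2 : ℝ) • mul x (mul x y) := by
    intro x y
    have h1 := heic (x + y)
    have h2 := heic (x - y)
    have h3 := heic y
    simp only [map_add, map_sub, LinearMap.add_apply, LinearMap.sub_apply,
      real_inner_add_add_self, real_inner_sub_sub_self, hcomm y x,
      hcomm (mul x x) y, real_inner_comm y x] at h1 h2 ⊢
    linear_combination (norm := module) ((2 : ℝ)⁻¹) • h1 - ((2 : ℝ)⁻¹) • h2 - h3
  intro x y
  have hx : ⟪x, mul x (mul x y)⟫ = ⟪x, x⟫ * ⟪x, y⟫ := by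
    calc ⟪x, mul x (mul x y)⟫ = ⟪mul x x, mul x y⟫ := (hassoc x x _).symm
      _ = ⟪mul (mul x x) x, y⟫ := (hassoc (mul x x) x y).symm
      _ = ⟪(⟪x, x⟫ : ℝ) • x, y⟫ := by rw [hcomm (mul x x) x, heic x]
      _ = ⟪x, x⟫ * ⟪x, y⟫ := real_inner_smul_left x y _
  rw [key x (mul x (mul x y)), key x y]
  simp only [map_sub, map_add, map_smul, LinearMap.sub_apply, LinearMap.add_apply,
    LinearMap.smul_apply, heic x, hx]
  module
end

section
/- Let c be a nonzero idempotent in an eiconal algebra V. Then on the orthogonal complement c⊥, the multiplication operator L_c satisfies 2L_c² + L_c − id = 0; hence every eigenvalue of L_c restricted to c⊥ lies in {−1, 1/2}, and 1 is a simple eigenvalue of L_c. -/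
open RealInnerProductSpace

/-- For a nonzero idempotent `c` in an eiconal algebra,
`2 L_c² + L_c − id = 0` on `c⊥`; each eigenvalue of `L_c` on `c⊥` is `−1` or `1/2`,
and `1` is a simple eigenvalue of `L_c`. -/
theorem stmt_9 {V : Type*} [NormedAddCommGroup V] [InnerProductSpace ℝ V]
    [FiniteDimensional ℝ V]
    (mul : V →ₗ[ℝ] V →ₗ[ℝ] V)
    (hcomm : ∀ x y, mul x y = mul y x)
    (hassoc : ∀ x y z, ⟪mul x y, z⟫ = ⟪x, mul y z⟫)
    (heic : ∀ x, mul x (mul x x) = ⟪x, x⟫ • x)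
    (c : V) (hc : mul c c = c) (hc0 : c ≠ 0) :
    (∀ v : V, ⟪v, c⟫ = 0 → (2 : ℝ) • mul c (mul c v) + mul c v - v = 0) ∧
      (∀ (v : V) (μ : ℝ), v ≠ 0 → ⟪v, c⟫ = 0 → mul c v = μ • v →
        μ = -1 ∨ μ = 1 / 2) ∧
      (∀ v : V, mul c v = v → ∃ t : ℝ, v = t • c) := by
  have hcc : ⟪c, c⟫ = (1 : ℝ) := by
    have h := heic c
    rw [hc, hc] at h
    by_contra hne
    have : (⟪c, c⟫ - 1) • c = 0 := by
      rw [sub_smul, one_smul, ← h, sub_self]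
    rcases smul_eq_zero.mp this with h' | h'
    · exact hne (by linarith [sub_eq_zero.mp h'])
    · exact hc0 h'
  have key : ∀ v : V, ⟪v, c⟫ = 0 →
      (2 : ℝ) • mul c (mul c v) + mul c v - v = 0 := by
    intro y hy
    have hyc : ⟪c, y⟫ = 0 := by rw [real_inner_comm]; exact hy
    have h1 := heic (c + (1 : ℝ) • y)
    have h2 := heic (c + (-1 : ℝ) • y)
    have h3 := heic (c + (2 : ℝ) • y)
    simp only [map_add, map_smul, LinearMap.add_apply, LinearMap.smul_apply,
      inner_add_add_self, real_inner_smul_left, real_inner_smul_right,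
      hc, hcc, hy, hyc, hcomm y c, smul_add, smul_smul] at h1 h2 h3
    linear_combination (norm := module) (1 : ℝ) • h1 - (1/3 : ℝ) • h2 - (1/6 : ℝ) • h3
  refine ⟨key, ?_, ?_⟩
  · intro v μ hv0 hvc hev
    have h := key v hvc
    rw [hev, map_smul, hev, smul_smul, smul_smul] at h
    have h' : (2 * (μ * μ) + μ - 1) • v = 0 := by
      rw [← h]; module
    rcases smul_eq_zero.mp h' with h'' | h''
    · have : (μ + 1) * (2 * μ - 1) = 0 := by ring_nf; linarith
      rcases mul_eq_zero.mp this with h3 | h3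
      · left; linarith
      · right; linarith
    · exact absurd h'' hv0
  · intro v hv
    set t : ℝ := ⟪v, c⟫ with ht
    set w : V := v - t • c with hw
    have hwc : ⟪w, c⟫ = 0 := by
      rw [hw, inner_sub_left, real_inner_smul_left, hcc]; ring
    have hcw : mul c w = w := by
      rw [hw, map_sub, map_smul, hc, hv]
    have h := key w hwc
    rw [hcw, hcw] at h
    have hw0 : w = 0 := by
      have : (2 : ℝ) • w = 0 := by rw [← h]; module
      simpa using this
    exact ⟨t, by rw [← sub_eq_zero]; rw [hw] at hw0; exact hw0⟩
end

section
/- Let c be a nonzero idempotent in an eiconal algebra V, and for λ ∈ {−1, 1/2, 1} let V_λ(c) be the λ-eigenspace of L_c. If x ∈ V_{λ₁}(c), y ∈ V_{λ₂}(c), z ∈ V_{λ₃}(c) with λ₁, λ₂, λ₃ ∈ {−1, 1/2} and λ₁ + λ₂ + λ₃ ≠ 0, then ⟨xy, z⟩ = 0. -/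
open RealInnerProductSpace

/-- Orthogonality of Peirce products: if `x, y, z` are eigenvectors
of `L_c` with eigenvalues `λ₁, λ₂, λ₃ ∈ {−1, 1/2}` and `λ₁ + λ₂ + λ₃ ≠ 0`,
then `⟪xy, z⟫ = 0`. -/
theorem stmt_11 {V : Type*} [NormedAddCommGroup V] [InnerProductSpace ℝ V]
    [FiniteDimensional ℝ V]
    (mul : V →ₗ[ℝ] V →ₗ[ℝ] V)
    (hcomm : ∀ x y, mul x y = mul y x)
    (hassoc : ∀ x y z, ⟪mul x y, z⟫ = ⟪x, mul y z⟫)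
    (heic : ∀ x, mul x (mul x x) = ⟪x, x⟫ • x)
    (c : V) (hc : mul c c = c) (hc0 : c ≠ 0)
    (lam₁ lam₂ lam₃ : ℝ)
    (h₁ : lam₁ = -1 ∨ lam₁ = 1 / 2) (h₂ : lam₂ = -1 ∨ lam₂ = 1 / 2)
    (h₃ : lam₃ = -1 ∨ lam₃ = 1 / 2)
    (hsum : lam₁ + lam₂ + lam₃ ≠ 0)
    (x y z : V)
    (hx : mul c x = lam₁ • x) (hy : mul c y = lam₂ • y) (hz : mul c z = lam₃ • z) :
    ⟪mul x y, z⟫ = 0 := by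
  -- eigenvectors with eigenvalue ≠ 1 are orthogonal to c
  have horth : ∀ (l : ℝ) (w : V), (l = -1 ∨ l = 1/2) → mul c w = l • w → ⟪c, w⟫ = 0 := by
    intro l w hl hw
    have h1 : ⟪mul c c, w⟫ = ⟪c, mul c w⟫ := hassoc c c w
    rw [hc, hw, real_inner_smul_right] at h1
    rcases hl with rfl | rfl <;> linarith
  have hocx : ⟪c, x⟫ = 0 := horth _ _ h₁ hx
  have hocy : ⟪c, y⟫ = 0 := horth _ _ h₂ hy
  have hocz : ⟪c, z⟫ = 0 := horth _ _ h₃ hz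
  have hoxc : ⟪x, c⟫ = 0 := by rw [real_inner_comm]; exact hocx
  have hoyc : ⟪y, c⟫ = 0 := by rw [real_inner_comm]; exact hocy
  -- commuted eigen-equations
  have hxc : mul x c = lam₁ • x := by rw [hcomm]; exact hx
  have hyc : mul y c = lam₂ • y := by rw [hcomm]; exact hy
  have hxy : mul y x = mul x y := hcomm y x
  have hyx : ⟪y, x⟫ = ⟪x, y⟫ := real_inner_comm x y
  -- ⟪c·(xy), z⟫ = λ₃ ⟪xy, z⟫
  have hcz : ⟪mul c (mul x y), z⟫ = lam₃ * ⟪mul x y, z⟫ := by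
    rw [hcomm, hassoc, hz, real_inner_smul_right]
  -- scalar form of the eiconal identity
  have key : ∀ u : V, ⟪mul u (mul u u), z⟫ = ⟪u, u⟫ * ⟪u, z⟫ := by
    intro u; rw [heic, real_inner_smul_left]
  have e1 := key (c + x + y)
  have e2 := key (c + x)
  have e3 := key (c + y)
  have e4 := key (x + y)
  have e5 := key c
  have e6 := key x
  have e7 := key y
  simp only [map_add, map_smul, LinearMap.add_apply, LinearMap.smul_apply,
    inner_add_left, inner_add_right, real_inner_smul_left, real_inner_smul_right,
    hc, hx, hy, hxc, hyc, hxy, hyx, hcz, hocx, hocy, hocz, hoxc, hoyc,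
    mul_zero, zero_mul, add_zero, zero_add] at e1 e2 e3 e4 e5 e6 e7
  have hkey : (lam₁ + lam₂ + lam₃) * ⟪mul x y, z⟫ = 0 := by
    linear_combination (e1 - e2 - e3 - e4 + e6 + e7) / 2
  exact (mul_eq_zero.mp hkey).resolve_left hsum
end

section
/- Let c be a nonzero idempotent in an eiconal algebra. Then the product of any two elements of the (−1)-eigenspace V_{−1}(c) of L_c lies in the line ℝc; moreover, for x ∈ V_{−1}(c), x² = −⟨x,x⟩c. -/
open RealInnerProductSpace

/-- For a nonzero idempotent `c` in an eiconal algebra,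
`V_{−1}(c) · V_{−1}(c) ⊆ ℝc`, and `x² = −⟪x,x⟫ c` for `x ∈ V_{−1}(c)`. -/
theorem stmt_12 {V : Type*} [NormedAddCommGroup V] [InnerProductSpace ℝ V]
    [FiniteDimensional ℝ V]
    (mul : V →ₗ[ℝ] V →ₗ[ℝ] V)
    (hcomm : ∀ x y, mul x y = mul y x)
    (hassoc : ∀ x y z, ⟪mul x y, z⟫ = ⟪x, mul y z⟫)
    (heic : ∀ x, mul x (mul x x) = ⟪x, x⟫ • x)
    (c : V) (hc : mul c c = c) (hc0 : c ≠ 0) :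
    (∀ x y : V, mul c x = -x → mul c y = -y → ∃ t : ℝ, mul x y = t • c) ∧
      (∀ x : V, mul c x = -x → mul x x = (-⟪x, x⟫) • c) := by
  -- ⟪c,c⟫ = 1
  have hcc : ⟪c, c⟫ = (1 : ℝ) := by
    have h := heic c
    rw [hc, hc] at h
    have h2 : (⟪c, c⟫ - 1) • c = 0 := by
      rw [sub_smul, one_smul, ← h, sub_self]
    rcases smul_eq_zero.mp h2 with h1 | h1
    · exact sub_eq_zero.mp h1
    · exact absurd h1 hc0
  -- linearized eiconal identity
  have lin : ∀ a b : V, mul a (mul b b) + (2 : ℝ) • mul b (mul a b)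
      = ⟪b, b⟫ • a + (2 * ⟪a, b⟫) • b := by
    intro a b
    have h1 := heic (a + b)
    have h2 := heic (a - b)
    have h3 := heic a
    simp only [map_add, map_sub, LinearMap.add_apply, LinearMap.sub_apply,
      inner_add_left, inner_add_right, inner_sub_left, inner_sub_right] at h1 h2
    simp only [hcomm b a, real_inner_comm a b] at h1 h2
    linear_combination (norm := module) ((1:ℝ)/2) • h1 + ((1:ℝ)/2) • h2 - h3
  -- eigenvectors are orthogonal to c
  have horth : ∀ x : V, mul c x = -x → ⟪c, x⟫ = 0 := by
    intro x hx
    have h : ⟪c, x⟫ = -⟪c, x⟫ := by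
      calc ⟪c, x⟫ = ⟪mul c c, x⟫ := by rw [hc]
        _ = ⟪c, mul c x⟫ := hassoc c c x
        _ = -⟪c, x⟫ := by rw [hx, inner_neg_right]
    linarith
  have main : ∀ x y : V, mul c x = -x → mul c y = -y → mul x y = (-⟪x, y⟫) • c := by
    intro x y hx hy
    -- fully linearized identity specialized at c, x, y
    have hfl : mul c (mul x y) = (2 : ℝ) • mul x y + ⟪x, y⟫ • c := by
      have h1 := lin c (x + y)
      have h2 := lin c x
      have h3 := lin c y
      simp only [map_add, LinearMap.add_apply, inner_add_left, inner_add_right] at h1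
      rw [hx] at h1 h2
      rw [hy] at h1 h3
      simp only [map_neg, hcomm y x, real_inner_comm x y, horth x hx, horth y hy]
        at h1 h2 h3
      linear_combination (norm := module) ((1:ℝ)/2) • h1 - ((1:ℝ)/2) • h2 - ((1:ℝ)/2) • h3
    have hwc : ⟪mul x y, c⟫ = -⟪x, y⟫ := by
      calc ⟪mul x y, c⟫ = ⟪x, mul y c⟫ := hassoc x y c
        _ = ⟪x, mul c y⟫ := by rw [hcomm y c]
        _ = -⟪x, y⟫ := by rw [hy, inner_neg_right]
    have e := lin (mul x y) c
    rw [hc, hcc, hcomm (mul x y) c, hwc, hfl] at e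
    rw [map_add, map_smul, map_smul, hc, hfl] at e
    linear_combination (norm := module) ((1:ℝ)/9) • e
  exact ⟨fun x y hx hy => ⟨-⟪x, y⟫, main x y hx hy⟩, fun x hx => main x x hx hx⟩
end

section
/- Let c be a nonzero idempotent in an eiconal algebra. Then V_{−1}(c)·V_{1/2}(c) ⊆ V_{1/2}(c). -/
open RealInnerProductSpace

/-- Linearization of the eiconal identity in one variable. -/
theorem eiconal_lin2 {V : Type*} [NormedAddCommGroup V] [InnerProductSpace ℝ V]
    (mul : V →ₗ[ℝ] V →ₗ[ℝ] V)
    (hcomm : ∀ x y, mul x y = mul y x)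
    (heic : ∀ x, mul x (mul x x) = ⟪x, x⟫ • x) (a b : V) :
    (2 : ℝ) • mul a (mul a b) + mul b (mul a a)
      = ⟪a, a⟫ • b + (2 * ⟪a, b⟫) • a := by
  have h1 := heic (a + b)
  have h2 := heic (a - b)
  have h3 := heic b
  simp only [map_add, map_sub, LinearMap.add_apply, LinearMap.sub_apply,
    inner_add_left, inner_add_right, inner_sub_left, inner_sub_right] at h1 h2
  have hab : ⟪b, a⟫ = ⟪a, b⟫ := real_inner_comm a b
  rw [hab] at h1 h2
  have hx1 : mul a (mul a b) = mul a (mul b a) := by rw [hcomm a b]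
  linear_combination (norm := module)
    (1/2 : ℝ) • h1 - (1/2 : ℝ) • h2 - h3 + hx1

/-- Full trilinearization of the eiconal identity. -/
theorem eiconal_lin3 {V : Type*} [NormedAddCommGroup V] [InnerProductSpace ℝ V]
    (mul : V →ₗ[ℝ] V →ₗ[ℝ] V)
    (hcomm : ∀ x y, mul x y = mul y x)
    (heic : ∀ x, mul x (mul x x) = ⟪x, x⟫ • x) (a b d : V) :
    mul a (mul d b) + mul d (mul a b) + mul b (mul a d)
      = ⟪a, d⟫ • b + ⟪a, b⟫ • d + ⟪d, b⟫ • a := by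
  have h1 := eiconal_lin2 mul hcomm heic (a + d) b
  have h2 := eiconal_lin2 mul hcomm heic a b
  have h3 := eiconal_lin2 mul hcomm heic d b
  simp only [map_add, LinearMap.add_apply, inner_add_left, inner_add_right] at h1
  have hda : ⟪d, a⟫ = ⟪a, d⟫ := real_inner_comm a d
  rw [hda] at h1
  have hx : mul b (mul a d) = mul b (mul d a) := by rw [hcomm a d]
  linear_combination (norm := module) (1/2 : ℝ) • h1 - (1/2 : ℝ) • h2
    - (1/2 : ℝ) • h3 + (1/2 : ℝ) • hx

/-- For a nonzero idempotent `c` in an eiconal algebra,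
`V_{−1}(c) · V_{1/2}(c) ⊆ V_{1/2}(c)`. -/
theorem stmt_13 {V : Type*} [NormedAddCommGroup V] [InnerProductSpace ℝ V]
    [FiniteDimensional ℝ V]
    (mul : V →ₗ[ℝ] V →ₗ[ℝ] V)
    (hcomm : ∀ x y, mul x y = mul y x)
    (hassoc : ∀ x y z, ⟪mul x y, z⟫ = ⟪x, mul y z⟫)
    (heic : ∀ x, mul x (mul x x) = ⟪x, x⟫ • x)
    (c : V) (hc : mul c c = c) (hc0 : c ≠ 0) :
    ∀ x y : V, mul c x = -x → mul c y = (1 / 2 : ℝ) • y →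
      mul c (mul x y) = (1 / 2 : ℝ) • mul x y := by
  intro x y hx hy
  -- orthogonality facts
  have hxc : ⟪x, c⟫ = 0 := by
    have h := hassoc x c c
    rw [hc, hcomm x c, hx, inner_neg_left] at h
    linarith
  have hyc : ⟪y, c⟫ = 0 := by
    have h := hassoc y c c
    rw [hc, hcomm y c, hy, inner_smul_left] at h
    simp only [RCLike.star_def, conj_trivial] at h
    linarith
  have hxy : ⟪x, y⟫ = 0 := by
    have h := hassoc x c y
    rw [hcomm x c, hx, hy, inner_neg_left, inner_smul_right] at h
    linarith
  have key := eiconal_lin3 mul hcomm heic c x y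
  rw [hcomm y x, hx, hy] at key
  have hcx : ⟪c, x⟫ = 0 := (real_inner_comm x c) ▸ hxc
  have hcy : ⟪c, y⟫ = 0 := (real_inner_comm y c) ▸ hyc
  have hyx0 : ⟪y, x⟫ = 0 := (real_inner_comm x y).trans hxy
  rw [hcx, hcy, hyx0] at key
  simp only [zero_smul, add_zero, map_smul, map_neg] at key
  rw [hcomm y x] at key
  linear_combination (norm := module) key
end

section
/- Let c be a nonzero idempotent in an eiconal algebra. Then for any x ∈ V_{−1}(c), the restriction of L_x to V_{1/2}(c) is an endomorphism of V_{1/2}(c) satisfying L_x² = (3/4)⟨x,x⟩·id on V_{1/2}(c). -/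
open RealInnerProductSpace

/-- For a nonzero idempotent `c` in an eiconal algebra and
`x ∈ V_{−1}(c)`, `L_x` preserves `V_{1/2}(c)` and `L_x² = (3/4)⟪x,x⟫ id` there. -/
theorem stmt_14 {V : Type*} [NormedAddCommGroup V] [InnerProductSpace ℝ V]
    [FiniteDimensional ℝ V]
    (mul : V →ₗ[ℝ] V →ₗ[ℝ] V)
    (hcomm : ∀ x y, mul x y = mul y x)
    (hassoc : ∀ x y z, ⟪mul x y, z⟫ = ⟪x, mul y z⟫)
    (heic : ∀ x, mul x (mul x x) = ⟪x, x⟫ • x)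
    (c : V) (hc : mul c c = c) (hc0 : c ≠ 0) :
    ∀ x y : V, mul c x = -x → mul c y = (1 / 2 : ℝ) • y →
      mul c (mul x y) = (1 / 2 : ℝ) • mul x y ∧
        mul x (mul x y) = (3 / 4 * ⟪x, x⟫) • y := by
  -- First linearization of the eiconal identity
  have lin1 : ∀ a b : V, mul b (mul a a) + mul a (mul a b) + mul a (mul a b)
      = ⟪a, a⟫ • b + ⟪a, b⟫ • a + ⟪a, b⟫ • a := by
    intro a b
    have hp := heic (a + b)
    have hm := heic (a - b)
    have hb := heic b
    simp only [map_add, map_sub, LinearMap.add_apply, LinearMap.sub_apply,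
      inner_add_left, inner_add_right, inner_sub_left, inner_sub_right,
      real_inner_comm a b, hcomm b a] at hp hm
    linear_combination (norm := module) ((1:ℝ)/2) • hp - ((1:ℝ)/2) • hm - hb
  -- Full trilinear identity
  have tri : ∀ a b z : V, mul b (mul a z) + mul a (mul z b) + mul z (mul a b)
      = ⟪a, z⟫ • b + ⟪z, b⟫ • a + ⟪a, b⟫ • z := by
    intro a b z
    have h1 := lin1 (a + z) b
    have h2 := lin1 a b
    have h3 := lin1 z b
    simp only [map_add, LinearMap.add_apply, inner_add_left, inner_add_right,
      hcomm z a, real_inner_comm a z] at h1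
    linear_combination (norm := module) ((1:ℝ)/2) • (h1 - h2 - h3)
  intro x y hx hy
  have hcx : ⟪c, x⟫ = 0 := by
    have h := hassoc c c x
    rw [hc, hx, inner_neg_right] at h
    linarith
  have hxc : ⟪x, c⟫ = 0 := by rw [real_inner_comm]; exact hcx
  have hcy : ⟪c, y⟫ = 0 := by
    have h := hassoc c c y
    rw [hc, hy, real_inner_smul_right] at h
    linarith
  have hyc : ⟪y, c⟫ = 0 := by rw [real_inner_comm]; exact hcy
  have hxy : ⟪x, y⟫ = 0 := by
    have h := hassoc x c y
    rw [hcomm x c, hx, hy, inner_neg_left, real_inner_smul_right] at h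
    linarith
  have hcc : ⟪c, c⟫ = 1 := by
    have h := heic c
    rw [hc, hc] at h
    have h2 : (⟪c, c⟫ - 1) • c = 0 := by rw [sub_smul, one_smul, ← h, sub_self]
    rcases smul_eq_zero.mp h2 with h' | h'
    · exact sub_eq_zero.mp h'
    · exact absurd h' hc0
  have hmxc : mul x c = -x := (hcomm x c).trans hx
  have hmyc : mul y c = (1 / 2 : ℝ) • y := (hcomm y c).trans hy
  -- mul x x = -(⟪x,x⟫) • c
  have H1 := lin1 x c
  rw [hmxc, map_neg, hxc, zero_smul, add_zero, add_zero] at H1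
  have hcu : ⟪c, mul x x⟫ = -⟪x, x⟫ := by
    have h := hassoc c x x
    rw [hx, inner_neg_left] at h
    linarith
  have H2 := lin1 c (mul x x)
  rw [hc, hcc, hcu, hcomm (mul x x) c] at H2
  have H1c := congrArg (fun v => mul c v) H1
  simp only [map_add, map_neg, map_smul, hc] at H1c
  have hx2 : mul x x = (-⟪x, x⟫) • c := by
    linear_combination (norm := module) ((1:ℝ)/9) • (H2 - (2:ℝ) • H1c - (5:ℝ) • H1)
  constructor
  · have ha := tri x c y
    rw [hmyc, hmxc, map_smul, map_neg, hcomm y x, hxy, hyc, hxc,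
      zero_smul, zero_smul, zero_smul] at ha
    linear_combination (norm := module) ha
  · have hb2 := lin1 x y
    rw [hx2, map_smul, hmyc, hxy, zero_smul] at hb2
    linear_combination (norm := module) ((1:ℝ)/2) • hb2
end

section
/- Let c be a nonzero idempotent in an eiconal algebra V of dimension ≥ 2. Then the eigenspace V_{−1}(c) is nontrivial, i.e. dim V_{−1}(c) ≥ 1. -/
open RealInnerProductSpace

private theorem pol1 {V : Type*} [NormedAddCommGroup V] [InnerProductSpace ℝ V]
    (mul : V →ₗ[ℝ] V →ₗ[ℝ] V)
    (hcomm : ∀ x y, mul x y = mul y x)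
    (heic : ∀ x, mul x (mul x x) = ⟪x, x⟫ • x)
    (x y : V) :
    mul y (mul x x) + (2:ℝ) • mul x (mul x y) = (2*⟪x,y⟫) • x + ⟪x,x⟫ • y := by
  have e1 := heic (x + y)
  have e2 := heic (x - y)
  have ey := heic y
  simp only [map_add, map_sub, LinearMap.add_apply, LinearMap.sub_apply,
    real_inner_add_add_self, real_inner_sub_sub_self] at e1 e2
  rw [hcomm y x] at e1 e2
  linear_combination (norm := module) (2:ℝ)⁻¹ • e1 - (2:ℝ)⁻¹ • e2 - ey

private theorem pol2 {V : Type*} [NormedAddCommGroup V] [InnerProductSpace ℝ V]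
    (mul : V →ₗ[ℝ] V →ₗ[ℝ] V)
    (hcomm : ∀ x y, mul x y = mul y x)
    (heic : ∀ x, mul x (mul x x) = ⟪x, x⟫ • x)
    (x y : V) :
    mul x (mul y y) + (2:ℝ) • mul y (mul x y) = (2*⟪x,y⟫) • y + ⟪y,y⟫ • x := by
  have e1 := heic (x + y)
  have e2 := heic (x - y)
  have ex := heic x
  simp only [map_add, map_sub, LinearMap.add_apply, LinearMap.sub_apply,
    real_inner_add_add_self, real_inner_sub_sub_self] at e1 e2
  rw [hcomm y x] at e1 e2
  linear_combination (norm := module) (2:ℝ)⁻¹ • e1 + (2:ℝ)⁻¹ • e2 - ex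

/-- If `dim V ≥ 2`, the `(−1)`-eigenspace of any nonzero idempotent
in an eiconal algebra is nontrivial. -/
theorem stmt_15 {V : Type*} [NormedAddCommGroup V] [InnerProductSpace ℝ V]
    [FiniteDimensional ℝ V]
    (hdim : 2 ≤ Module.finrank ℝ V)
    (mul : V →ₗ[ℝ] V →ₗ[ℝ] V)
    (hcomm : ∀ x y, mul x y = mul y x)
    (hassoc : ∀ x y z, ⟪mul x y, z⟫ = ⟪x, mul y z⟫)
    (heic : ∀ x, mul x (mul x x) = ⟪x, x⟫ • x)
    (c : V) (hc : mul c c = c) (hc0 : c ≠ 0) :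
    ∃ v : V, v ≠ 0 ∧ mul c v = -v := by
  by_contra h
  push_neg at h
  -- so any vector with mul c v = -v is zero
  have hne : ∀ v : V, mul c v = -v → v = 0 := by
    intro v hv
    by_contra hv0
    exact h v hv0 hv
  -- inner c c = 1
  have hcc : ⟪c, c⟫ = (1:ℝ) := by
    have := heic c
    rw [hc, hc] at this
    have h2 : (⟪c,c⟫ - 1) • c = 0 := by
      rw [sub_smul, one_smul, ← this, sub_self]
    rcases smul_eq_zero.mp h2 with h3 | h3
    · linarith [sub_eq_zero.mp (by exact_mod_cast h3)]
    · exact absurd h3 hc0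
  -- find a nonzero vector orthogonal to c
  obtain ⟨y, hymem, hy0⟩ : ∃ y ∈ (ℝ ∙ c)ᗮ, y ≠ 0 := by
    have hrk : Module.finrank ℝ (ℝ ∙ c) + Module.finrank ℝ (ℝ ∙ c)ᗮ
        = Module.finrank ℝ V := Submodule.finrank_add_finrank_orthogonal _
    rw [finrank_span_singleton hc0] at hrk
    have : 0 < Module.finrank ℝ (ℝ ∙ c)ᗮ := by omega
    have hbot : (ℝ ∙ c)ᗮ ≠ ⊥ := by
      intro hb
      rw [hb] at this
      simp at this
    exact Submodule.exists_mem_ne_zero_of_ne_bot hbot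
  have hcy : ⟪c, y⟫ = (0:ℝ) :=
    Submodule.mem_orthogonal_singleton_iff_inner_right.mp hymem
  -- Step 1 : mul c y = (1/2) y
  have step1 : mul c y = (2:ℝ)⁻¹ • y := by
    have p1 := pol1 mul hcomm heic c y
    rw [hc, hcc, hcy, hcomm y c] at p1
    -- p1 : mul c y + 2 • mul c (mul c y) = 0 • c + 1 • y
    set w := (2:ℝ) • mul c y - y with hw
    have hw1 : mul c w = -w := by
      have : mul c w = (2:ℝ) • mul c (mul c y) - mul c y := by
        rw [hw]; simp [map_sub, map_smul]
      rw [this, hw]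
      linear_combination (norm := module) p1
    have hw0 := hne w hw1
    rw [hw] at hw0
    have : (2:ℝ) • mul c y = y := by linear_combination (norm := module) hw0
    calc mul c y = (2:ℝ)⁻¹ • ((2:ℝ) • mul c y) := by
          rw [smul_smul]; norm_num
      _ = (2:ℝ)⁻¹ • y := by rw [this]
  -- Step 2 : mul y y = (⟪y,y⟫/2) • c
  have step2 : mul y y = (⟪y,y⟫/2) • c := by
    have p2 := pol2 mul hcomm heic c y
    rw [hcy, step1] at p2
    -- p2 : mul c (mul y y) + 2 • mul y ((1/2) • y) = 0 • y + ⟪y,y⟫ • c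
    set u := mul y y - (⟪y,y⟫/2) • c with hu
    have hu1 : mul c u = -u := by
      have hmc : mul c u = mul c (mul y y) - (⟪y,y⟫/2) • c := by
        rw [hu]; simp [map_sub, map_smul, hc]
      rw [hmc, hu]
      have hy2 : mul y ((2:ℝ)⁻¹ • y) = (2:ℝ)⁻¹ • mul y y := by simp [map_smul]
      rw [hy2] at p2
      linear_combination (norm := module) p2
    have hu0 := hne u hu1
    rw [hu] at hu0
    linear_combination (norm := module) hu0
  -- Step 3 : contradiction with heic y
  have e := heic y
  rw [step2] at e
  rw [map_smul, hcomm y c, step1, smul_smul] at e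
  have : (⟪y,y⟫ - ⟪y,y⟫/2 * 2⁻¹) • y = 0 := by
    rw [sub_smul, ← e, sub_self]
  rcases smul_eq_zero.mp this with h3 | h3
  · have hyy : ⟪y,y⟫ = 0 := by nlinarith [h3]
    exact hy0 (inner_self_eq_zero.mp hyy)
  · exact hy0 h3
end

section
/- Let V be an eiconal algebra satisfying trace L_x = 0 for all x, let c be a nonzero idempotent, and set m = dim V_{−1}(c) − 1. Then dim V_{1/2}(c) = 2m and dim V = 3m + 2. -/
/-!
Linearizing `x (x x) = ⟪x, x⟫ x` at the idempotent `c` gives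
`2 L_c² y + L_c y = 2 ⟪c, y⟫ c + y`, hence `(L_c - 1)(L_c + 1)(L_c - 1/2) = 0`. So `V` is the direct
sum of the eigenspaces of `L_c` for `1`, `-1`, `1/2`, and the first one is `ℝ c`. Counting
dimensions, `dim V = 1 + dim V_{-1} + dim V_{1/2}`, while `trace L_c = 0` reads
`1 - dim V_{-1} + dim V_{1/2} / 2 = 0`.
-/

open RealInnerProductSpace Module Module.End

namespace Module.End

variable {K W : Type*} [Field K] [AddCommGroup W] [Module K W]

theorem iSup_eigenspace_eq_top_of_mul_mul_eq_zero {f : End K W} {a b d : K}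
    (hab : a ≠ b) (had : a ≠ d) (hbd : b ≠ d)
    (h : (f - a • 1) * (f - b • 1) * (f - d • 1) = 0) :
    ⨆ i, f.eigenspace (![a, b, d] i) = ⊤ := by
  rw [Submodule.eq_top_iff']
  intro x
  have hx : f (f (f x)) = (a + b + d) • f (f x) - (a * b + a * d + b * d) • f x
      + (a * b * d) • x := by
    have := congrArg (· x) h
    simp only [mul_apply, LinearMap.sub_apply, LinearMap.smul_apply, one_apply, map_sub,
      map_smul, LinearMap.zero_apply] at this
    linear_combination (norm := module) this
  -- `p r s = (f - r) (f - s) x` is killed by `f - t` for the remaining root `t`.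
  let p : K → K → W := fun r s => f (f x) - (r + s) • f x + (r * s) • x
  have hp : ∀ {r s t : K}, r + s + t = a + b + d → r * s + r * t + s * t = a * b + a * d + b * d →
      r * s * t = a * b * d → p r s ∈ f.eigenspace t := by
    intro r s t h1 h2 h3
    rw [mem_eigenspace_iff]
    simp only [p, map_add, map_sub, map_smul]
    rw [hx, ← h1, ← h2, ← h3]
    module
  have hk : (a - b) * (a - d) * (b - d) ≠ 0 := by
    simp [sub_ne_zero, hab, had, hbd]
  have hlagrange : x = ((a - b) * (a - d) * (b - d))⁻¹ •
      ((b - d) • p b d - (a - d) • p a d + (a - b) • p a b) := by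
    rw [eq_inv_smul_iff₀ hk]
    simp only [p]
    module
  have ha : p b d ∈ f.eigenspace a := hp (by ring) (by ring) (by ring)
  have hb : p a d ∈ f.eigenspace b := hp (by ring) (by ring) (by ring)
  have hd : p a b ∈ f.eigenspace d := hp (by ring) (by ring) (by ring)
  rw [hlagrange]
  refine Submodule.smul_mem _ _ (add_mem (sub_mem ?_ ?_) ?_)
  · exact Submodule.smul_mem _ _ (Submodule.mem_iSup_of_mem 0 ha)
  · exact Submodule.smul_mem _ _ (Submodule.mem_iSup_of_mem 1 hb)
  · exact Submodule.smul_mem _ _ (Submodule.mem_iSup_of_mem 2 hd)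

theorem isInternal_eigenspace_of_mul_mul_eq_zero {f : End K W} {a b d : K}
    (hab : a ≠ b) (had : a ≠ d) (hbd : b ≠ d)
    (h : (f - a • 1) * (f - b • 1) * (f - d • 1) = 0) :
    DirectSum.IsInternal fun i => f.eigenspace (![a, b, d] i) := by
  have hinj : Function.Injective ![a, b, d] := by
    intro i j hij
    fin_cases i <;> fin_cases j <;> simp_all [eq_comm]
  exact DirectSum.isInternal_submodule_of_iSupIndep_of_iSup_eq_top
    (f.eigenspaces_iSupIndep.comp hinj) (iSup_eigenspace_eq_top_of_mul_mul_eq_zero hab had hbd h)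

theorem trace_eq_sum_mul_finrank_eigenspace [FiniteDimensional K W] {ι : Type*} [Fintype ι]
    [DecidableEq ι] {f : End K W} {μ : ι → K}
    (h : DirectSum.IsInternal fun i => f.eigenspace (μ i)) :
    LinearMap.trace K W f = ∑ i, μ i * finrank K (f.eigenspace (μ i)) := by
  rw [LinearMap.trace_eq_sum_trace_restrict h fun i =>
    f.mem_invtSubmodule_iff_forall_mem_of_mem.mp (f.eigenspace_mem_invtSubmodule (μ i))]
  simp [restrict_eigenspace]

end Module.End

theorem DirectSum.IsInternal.finrank_eq_sum {K W ι : Type*} [Field K] [AddCommGroup W]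
    [Module K W] [FiniteDimensional K W] [Fintype ι] [DecidableEq ι] {N : ι → Submodule K W}
    (h : DirectSum.IsInternal N) : finrank K W = ∑ i, finrank K (N i) := by
  rw [← (LinearEquiv.ofBijective (DirectSum.coeLinearMap N) h).finrank_eq, finrank_directSum]

namespace Eiconal

variable {V : Type*} [NormedAddCommGroup V] [InnerProductSpace ℝ V] {mul : V →ₗ[ℝ] V →ₗ[ℝ] V}

theorem inner_self_eq_one_of_mul_self_eq_self (heic : ∀ x, mul x (mul x x) = ⟪x, x⟫ • x)
    {c : V} (hc : mul c c = c) (hc0 : c ≠ 0) : ⟪c, c⟫ = 1 := by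
  have h : (⟪c, c⟫ - 1) • c = 0 := by
    rw [sub_smul, one_smul, ← heic c, hc, hc, sub_self]
  exact sub_eq_zero.mp ((smul_eq_zero.mp h).resolve_right hc0)

/-- The derivative of `x ↦ x (x x) - ⟪x, x⟫ x` in the direction `y`. -/
theorem two_smul_mul_mul_add_mul_mul_self (hcomm : ∀ x y, mul x y = mul y x)
    (heic : ∀ x, mul x (mul x x) = ⟪x, x⟫ • x) (x y : V) :
    (2 : ℝ) • mul x (mul x y) + mul y (mul x x) = (2 * ⟪x, y⟫) • x + ⟪x, x⟫ • y := by
  have hp := heic (x + y)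
  have hm := heic (x - y)
  simp only [map_add, map_sub, LinearMap.add_apply, LinearMap.sub_apply,
    real_inner_add_add_self, real_inner_sub_sub_self, hcomm y x] at hp hm
  linear_combination (norm := module) (2⁻¹ : ℝ) • hp - (2⁻¹ : ℝ) • hm - heic y

theorem two_smul_mul_mul_add_mul_of_idempotent (hcomm : ∀ x y, mul x y = mul y x)
    (heic : ∀ x, mul x (mul x x) = ⟪x, x⟫ • x) {c : V} (hc : mul c c = c) (hc0 : c ≠ 0)
    (y : V) : (2 : ℝ) • mul c (mul c y) + mul c y = (2 * ⟪c, y⟫) • c + y := by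
  have h := two_smul_mul_mul_add_mul_mul_self hcomm heic c y
  rwa [hc, hcomm y c, inner_self_eq_one_of_mul_self_eq_self heic hc hc0, one_smul] at h

theorem cubic_mul_idempotent_eq_zero (hcomm : ∀ x y, mul x y = mul y x)
    (heic : ∀ x, mul x (mul x x) = ⟪x, x⟫ • x) {c : V} (hc : mul c c = c) (hc0 : c ≠ 0) :
    (mul c - (1 : ℝ) • 1) * (mul c - (-1 : ℝ) • 1) * (mul c - (1 / 2 : ℝ) • 1) = 0 := by
  ext y
  have h := two_smul_mul_mul_add_mul_of_idempotent hcomm heic hc hc0 y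
  have hLh := congrArg (mul c) h
  simp only [map_add, map_smul, hc] at hLh
  simp only [mul_apply, LinearMap.sub_apply, LinearMap.smul_apply, one_apply, map_sub, map_smul,
    LinearMap.zero_apply]
  linear_combination (norm := module) (2⁻¹ : ℝ) • (hLh - h)

theorem eigenspace_mul_idempotent_one_eq_span (hcomm : ∀ x y, mul x y = mul y x)
    (heic : ∀ x, mul x (mul x x) = ⟪x, x⟫ • x) {c : V} (hc : mul c c = c) (hc0 : c ≠ 0) :
    eigenspace (mul c) 1 = ℝ ∙ c := by
  ext x
  rw [mem_eigenspace_iff, one_smul, Submodule.mem_span_singleton]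
  constructor
  · intro hx
    have h := two_smul_mul_mul_add_mul_of_idempotent hcomm heic hc hc0 x
    rw [hx, hx] at h
    exact ⟨⟪c, x⟫, by linear_combination (norm := module) (-2⁻¹ : ℝ) • h⟩
  · rintro ⟨a, rfl⟩
    rw [map_smul, hc]

end Eiconal

theorem stmt_16_general {V : Type*} [NormedAddCommGroup V] [InnerProductSpace ℝ V]
    [FiniteDimensional ℝ V]
    (mul : V →ₗ[ℝ] V →ₗ[ℝ] V)
    (hcomm : ∀ x y, mul x y = mul y x)
    (heic : ∀ x, mul x (mul x x) = ⟪x, x⟫ • x)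
    (htr : ∀ x : V, LinearMap.trace ℝ V (mul x) = 0)
    (c : V) (hc : mul c c = c) (hc0 : c ≠ 0)
    (m : ℕ)
    (hm : m = Module.finrank ℝ (Module.End.eigenspace (mul c) (-1)) - 1) :
    Module.finrank ℝ (Module.End.eigenspace (mul c) (1 / 2 : ℝ)) = 2 * m ∧
      Module.finrank ℝ V = 3 * m + 2 := by
  have hint := isInternal_eigenspace_of_mul_mul_eq_zero (by norm_num) (by norm_num)
    (by norm_num) (Eiconal.cubic_mul_idempotent_eq_zero hcomm heic hc hc0)
  have hone : finrank ℝ (eigenspace (mul c) 1) = 1 := by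
    rw [Eiconal.eigenspace_mul_idempotent_one_eq_span hcomm heic hc hc0,
      finrank_span_singleton hc0]
  have hdim : finrank ℝ V = finrank ℝ (eigenspace (mul c) 1)
      + finrank ℝ (eigenspace (mul c) (-1)) + finrank ℝ (eigenspace (mul c) (1 / 2 : ℝ)) :=
    hint.finrank_eq_sum.trans (Fin.sum_univ_three _)
  have htrace : LinearMap.trace ℝ V (mul c) = 1 * finrank ℝ (eigenspace (mul c) 1)
      + -1 * finrank ℝ (eigenspace (mul c) (-1))
      + 1 / 2 * finrank ℝ (eigenspace (mul c) (1 / 2 : ℝ)) :=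
    (trace_eq_sum_mul_finrank_eigenspace hint).trans (Fin.sum_univ_three _)
  rw [hone] at hdim
  rw [hone, htr c] at htrace
  have hrel : (finrank ℝ (eigenspace (mul c) (1 / 2 : ℝ)) : ℝ) + 2
      = 2 * finrank ℝ (eigenspace (mul c) (-1)) := by
    linarith
  norm_cast at hrel
  omega

/-- In a trace-free (harmonic) eiconal algebra, with
`m = dim V_{−1}(c) − 1`, one has `dim V_{1/2}(c) = 2m` and `dim V = 3m + 2`. -/
theorem stmt_16 {V : Type*} [NormedAddCommGroup V] [InnerProductSpace ℝ V]
    [FiniteDimensional ℝ V]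
    (mul : V →ₗ[ℝ] V →ₗ[ℝ] V)
    (hcomm : ∀ x y, mul x y = mul y x)
    (hassoc : ∀ x y z, ⟪mul x y, z⟫ = ⟪x, mul y z⟫)
    (heic : ∀ x, mul x (mul x x) = ⟪x, x⟫ • x)
    (htr : ∀ x : V, LinearMap.trace ℝ V (mul x) = 0)
    (c : V) (hc : mul c c = c) (hc0 : c ≠ 0)
    (m : ℕ)
    (hm : m = Module.finrank ℝ (Module.End.eigenspace (mul c) (-1)) - 1) :
    Module.finrank ℝ (Module.End.eigenspace (mul c) (1 / 2 : ℝ)) = 2 * m ∧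
      Module.finrank ℝ V = 3 * m + 2 :=
  stmt_16_general mul hcomm heic htr c hc hc0 m hm
end

section
/- If c is a nonzero idempotent in the algebra V(u) of a cubic form u on ℝⁿ, and w(x) = 6u(x)/|x|, then the Hessian of w at c equals (1/|c|)(6L_c − id − (3/|c|²) c⊗c); consequently c is an eigenvector of D²w(c) with eigenvalue 2/|c|, and on c⊥ the spectrum of D²w(c) is {(6λ−1)/|c| : λ an eigenvalue of L_c on c⊥}. -/
/-!
With `u x = ⟪x², x⟫`, the symmetry of the trilinear form `⟪xy, z⟫` gives `Du(x) = 3⟪x², ·⟫` and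
`D⟪x², y⟫ = 2⟪xy, ·⟫`; differentiating `w = u · ‖x‖⁻¹` twice by the product rule yields the Hessian
at every `x ≠ 0`. At an idempotent, `c² = c` and `⟪c², c⟫ = ‖c‖²` collapse it to the claimed form,
and the eigenvalue statements are its values at `y = c` and at eigenvectors of `L_c` orthogonal
to `c`.
-/

open RealInnerProductSpace

variable {E : Type*} [NormedAddCommGroup E] [InnerProductSpace ℝ E]

theorem hasFDerivAt_norm_inv {x : E} (hx : x ≠ 0) :
    HasFDerivAt (fun y : E => ‖y‖⁻¹) (-(‖x‖ ^ 3)⁻¹ • innerSL ℝ x) x := by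
  have h0 : ‖x‖ ≠ 0 := norm_ne_zero_iff.mpr hx
  have hnorm : HasFDerivAt (fun y : E => ‖y‖) ((1 / (2 * √(‖x‖ ^ 2))) • (2 • innerSL ℝ x)) x := by
    simpa only [Real.sqrt_sq (norm_nonneg _)] using
      (hasStrictFDerivAt_norm_sq x).hasFDerivAt.sqrt (pow_ne_zero 2 h0)
  refine ((hasDerivAt_inv h0).comp_hasFDerivAt x hnorm).congr_fderiv ?_
  ext z
  simp only [smul_apply, innerSL_apply_apply, Real.sqrt_sq (norm_nonneg _), smul_eq_mul, nsmul_eq_mul]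
  field_simp
  ring

section CubicForm

variable (B : E →L[ℝ] E →L[ℝ] E)

theorem inner_apply_apply_rotate (hassoc : ∀ x y z, ⟪B x y, z⟫ = ⟪x, B y z⟫) (x y z : E) :
    ⟪B x y, z⟫ = ⟪B y z, x⟫ := by
  rw [hassoc, real_inner_comm]

variable (hcomm : ∀ x y, B x y = B y x) (hassoc : ∀ x y z, ⟪B x y, z⟫ = ⟪x, B y z⟫)
include hcomm hassoc

theorem hasFDerivAt_inner_apply_self_left (x y : E) :
    HasFDerivAt (fun x => ⟪B x x, y⟫) ((2 : ℝ) • innerSL ℝ (B x y)) x := by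
  refine ((B.hasFDerivAt_of_bilinear (hasFDerivAt_id x) (hasFDerivAt_id x)).inner ℝ
    (hasFDerivAt_const y x)).congr_fderiv ?_
  ext h
  have hrot := inner_apply_apply_rotate B hassoc
  simp only [ContinuousLinearMap.precompR, ContinuousLinearMap.precompL, ContinuousLinearMap.comp_apply,
    ContinuousLinearMap.compL_apply, ContinuousLinearMap.comp_id, ContinuousLinearMap.flip_apply,
    ContinuousLinearMap.prod_apply, add_apply, zero_apply, fderivInnerCLM_apply, inner_zero_right,
    inner_add_left, hcomm x h, hrot, zero_add, smul_apply, coe_innerSL_apply, smul_eq_mul, id_eq]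
  ring

theorem hasFDerivAt_inner_apply_self_self (x : E) :
    HasFDerivAt (fun x => ⟪B x x, x⟫) ((3 : ℝ) • innerSL ℝ (B x x)) x := by
  refine ((B.hasFDerivAt_of_bilinear (hasFDerivAt_id x) (hasFDerivAt_id x)).inner ℝ
    (hasFDerivAt_id x)).congr_fderiv ?_
  ext h
  have hrot := inner_apply_apply_rotate B hassoc
  simp only [ContinuousLinearMap.precompR, ContinuousLinearMap.precompL, ContinuousLinearMap.comp_apply,
    ContinuousLinearMap.compL_apply, ContinuousLinearMap.comp_id, ContinuousLinearMap.flip_apply,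
    ContinuousLinearMap.prod_apply, ContinuousLinearMap.id_apply, add_apply, fderivInnerCLM_apply,
    inner_add_left, hcomm x h, hrot, smul_apply, coe_innerSL_apply, smul_eq_mul, id_eq]
  ring

theorem fderiv_inner_apply_self_self_div_norm {x : E} (hx : x ≠ 0) (y : E) :
    fderiv ℝ (fun x => ⟪B x x, x⟫ / ‖x‖) x y =
      3 * ⟪B x x, y⟫ / ‖x‖ - ⟪B x x, x⟫ * ⟪x, y⟫ / ‖x‖ ^ 3 := by
  simp_rw [div_eq_mul_inv, ← inv_pow]
  rw [((hasFDerivAt_inner_apply_self_self B hcomm hassoc x).fun_mul (hasFDerivAt_norm_inv hx)).fderiv]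
  simp only [neg_smul, smul_neg, add_apply, neg_apply, smul_apply, coe_innerSL_apply, smul_eq_mul,
    inv_pow]
  ring

theorem fderiv_fderiv_inner_apply_self_self_div_norm {x : E} (hx : x ≠ 0) (y z : E) :
    fderiv ℝ (fun x => fderiv ℝ (fun x => ⟪B x x, x⟫ / ‖x‖) x y) x z =
      6 * ⟪B x y, z⟫ / ‖x‖ - ⟪B x x, x⟫ * ⟪y, z⟫ / ‖x‖ ^ 3
        - 3 * (⟪B x x, y⟫ * ⟪x, z⟫ + ⟪B x x, z⟫ * ⟪x, y⟫) / ‖x‖ ^ 3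
        + 3 * ⟪B x x, x⟫ * ⟪x, y⟫ * ⟪x, z⟫ / ‖x‖ ^ 5 := by
  have hfderiv : (fun x => fderiv ℝ (fun x => ⟪B x x, x⟫ / ‖x‖) x y) =ᶠ[nhds x]
      fun x => 3 * ⟪B x x, y⟫ * ‖x‖⁻¹ - ⟪B x x, x⟫ * ⟪x, y⟫ * ‖x‖⁻¹ ^ 3 := by
    filter_upwards [eventually_ne_nhds hx] with x' hx'
    rw [fderiv_inner_apply_self_self_div_norm B hcomm hassoc hx', div_eq_mul_inv, div_eq_mul_inv,
      inv_pow]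
  have hN := hasFDerivAt_norm_inv hx
  have hd := (((hasFDerivAt_inner_apply_self_left B hcomm hassoc x y).const_mul 3).fun_mul hN).fun_sub
    (((hasFDerivAt_inner_apply_self_self B hcomm hassoc x).fun_mul
      ((hasFDerivAt_id x).inner ℝ (hasFDerivAt_const y x))).fun_mul (hN.pow 3))
  simp only [id_eq] at hd
  rw [hfderiv.fderiv_eq, hd.fderiv]
  have h0 : ‖x‖ ≠ 0 := norm_ne_zero_iff.mpr hx
  simp only [real_inner_comm, neg_smul, smul_neg, Nat.add_one_sub_one, inv_pow, nsmul_eq_mul,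
    Nat.cast_ofNat, smul_add, sub_apply, add_apply, neg_apply, smul_apply, coe_innerSL_apply,
    smul_eq_mul, ContinuousLinearMap.comp_apply, ContinuousLinearMap.prod_apply,
    ContinuousLinearMap.id_apply, zero_apply, fderivInnerCLM_apply, inner_zero_right, zero_add]
  field_simp
  ring

theorem fderiv_fderiv_inner_apply_self_self_div_norm_of_idempotent {c : E} (hc : B c c = c)
    (hc0 : c ≠ 0) (y z : E) :
    fderiv ℝ (fun x => fderiv ℝ (fun x => ⟪B x x, x⟫ / ‖x‖) x y) c z =
      (1 / ‖c‖) * (6 * ⟪B c y, z⟫ - ⟪y, z⟫ - 3 / ‖c‖ ^ 2 * ⟪c, y⟫ * ⟪c, z⟫) := by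
  rw [fderiv_fderiv_inner_apply_self_self_div_norm B hcomm hassoc hc0, hc,
    real_inner_self_eq_norm_sq]
  have h0 : ‖c‖ ≠ 0 := norm_ne_zero_iff.mpr hc0
  field_simp
  ring

end CubicForm

/-- If `c` is a nonzero idempotent of the algebra `V(u)` of a cubic
form on `ℝⁿ` and `w(x) = ⟪x², x⟫ / ‖x‖`, then the Hessian of `w` at `c` equals
`(1/‖c‖)(6 L_c − id − (3/‖c‖²) c⊗c)`; consequently `c` is an eigenvector of
`D²w(c)` with eigenvalue `2/‖c‖`, and an eigenvector `v ⊥ c` of `L_c` with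
eigenvalue `λ` is an eigenvector of `D²w(c)` with eigenvalue `(6λ−1)/‖c‖`. -/
theorem stmt_17 {n : ℕ}
    (mul : EuclideanSpace ℝ (Fin n) →ₗ[ℝ] EuclideanSpace ℝ (Fin n) →ₗ[ℝ]
      EuclideanSpace ℝ (Fin n))
    (hcomm : ∀ x y, mul x y = mul y x)
    (hassoc : ∀ x y z, ⟪mul x y, z⟫ = ⟪x, mul y z⟫)
    (w : EuclideanSpace ℝ (Fin n) → ℝ)
    (hw : ∀ x, w x = ⟪mul x x, x⟫ / ‖x‖)
    (c : EuclideanSpace ℝ (Fin n)) (hc : mul c c = c) (hc0 : c ≠ 0) :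
    (∀ y z, fderiv ℝ (fun x => fderiv ℝ w x y) c z =
        (1 / ‖c‖) * (6 * ⟪mul c y, z⟫ - ⟪y, z⟫ - 3 / ‖c‖ ^ 2 * ⟪c, y⟫ * ⟪c, z⟫)) ∧
      (∀ z, fderiv ℝ (fun x => fderiv ℝ w x c) c z = 2 / ‖c‖ * ⟪c, z⟫) ∧
      (∀ (v : EuclideanSpace ℝ (Fin n)) (lam : ℝ), ⟪v, c⟫ = 0 →
        mul c v = lam • v →
        ∀ z, fderiv ℝ (fun x => fderiv ℝ w x v) c z =
          (6 * lam - 1) / ‖c‖ * ⟪v, z⟫) := by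
  set B := mul.toContinuousBilinearMap
  have hessian : ∀ y z, fderiv ℝ (fun x => fderiv ℝ w x y) c z =
      (1 / ‖c‖) * (6 * ⟪mul c y, z⟫ - ⟪y, z⟫ - 3 / ‖c‖ ^ 2 * ⟪c, y⟫ * ⟪c, z⟫) := by
    rw [show w = fun x => ⟪B x x, x⟫ / ‖x‖ from funext hw]
    exact fderiv_fderiv_inner_apply_self_self_div_norm_of_idempotent B hcomm hassoc hc hc0
  have h0 : ‖c‖ ≠ 0 := norm_ne_zero_iff.mpr hc0
  refine ⟨hessian, fun z => ?_, fun v lam hvc hcv z => ?_⟩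
  · rw [hessian, hc, real_inner_self_eq_norm_sq]
    field_simp
    ring
  · rw [hessian, hcv, real_inner_smul_left, real_inner_comm v c, hvc]
    field_simp
    ring
end
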